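/- arXiv:2411.04903 — 8 statements merged into one kernel-verified Lean document; each statement's English description precedes it below -/
import Mathlib

section
/- Let A and B be nonempty sets, K a compact metric space, ε > 0, and f : A × B → K an ε-stable function. Fix real numbers γ > δ > 0 and let p : B → K belong to the type space S_f. Then there exist n ∈ ℕ and points a₀, …, a_{n−1} ∈ A such that for all b, c ∈ B: if dist(f(aᵢ, b), f(aᵢ, c)) < δ for every i < n, then dist(p(b), p(c)) < 2ε + γ. -/
/-- `f : A × B → K` is `ε`-stable if there are no sequences `a : ℕ → A`, `b : ℕ → B`
with `dist (f (a i, b j)) (f (a j, b i)) ≥ ε` for all `i < j`. -/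
def EpsStable {A B K : Type*} [MetricSpace K] (ε : ℝ) (f : A × B → K) : Prop :=
  ¬ ∃ (a : ℕ → A) (b : ℕ → B), ∀ i j : ℕ, i < j →
    ε ≤ dist (f (a i, b j)) (f (a j, b i))

/-- The type space `S_f`: the closure of `{fun b => f (a, b) | a ∈ A}` in the
product (pointwise convergence) topology on `B → K`. -/
def TypeSpace {A B K : Type*} [MetricSpace K] (f : A × B → K) : Set (B → K) :=
  closure {g : B → K | ∃ a : A, g = fun b => f (a, b)}

/-- An ultrafilter decides any boolean function. -/
lemma ultra_bool (U : Ultrafilter ℕ) (g : ℕ → Bool) : ∃ v : Bool, ∀ᶠ n in ↑U, g n = v := by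
  rcases U.mem_or_compl_mem {n | g n = true} with h | h
  · exact ⟨true, h⟩
  · refine ⟨false, ?_⟩
    have : {n | g n = true}ᶜ ∈ (U : Filter ℕ) := h
    filter_upwards [this] with n hn
    simpa using hn

/-- Infinite Ramsey theorem for pairs with two colors, in subsequence form. -/
lemma ramsey_two (C : ℕ → ℕ → Bool) :
    ∃ (φ : ℕ → ℕ) (v : Bool), StrictMono φ ∧ ∀ i j, i < j → C (φ i) (φ j) = v := by
  classical
  set U := Filter.hyperfilter ℕ with hU
  choose col hcol using fun i => ultra_bool U (C i)
  obtain ⟨v, hv⟩ := ultra_bool U col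
  have hstep : ∀ s : Finset ℕ, (∀ x ∈ s, col x = v) →
      ∃ y, col y = v ∧ ∀ x ∈ s, x < y ∧ C x y = v := by
    intro s hs
    have h2 : ∀ᶠ m in ↑U, ∀ x ∈ s, C x m = v := by
      rw [Filter.eventually_all_finset]
      intro x hx
      filter_upwards [hcol x] with m hm
      rw [hm, hs x hx]
    have h3 : ∀ᶠ m in ↑U, ∀ x ∈ s, x < m := by
      refine Filter.Eventually.filter_mono Nat.hyperfilter_le_atTop ?_
      rw [Filter.eventually_all_finset]
      intro x hx
      exact Filter.eventually_gt_atTop x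
    obtain ⟨m, hm1, hm2, hm3⟩ := (hv.and (h2.and h3)).exists
    exact ⟨m, hm1, fun x hx => ⟨hm3 x hx, hm2 x hx⟩⟩
  obtain ⟨φ, hφP, hφr⟩ := exists_seq_of_forall_finset_exists (fun n => col n = v)
    (fun m n => m < n ∧ C m n = v) hstep
  exact ⟨φ, v, (fun m n h => (hφr m n h).1 : StrictMono φ),
    fun i j hij => (hφr i j hij).2⟩

theorem stmt0 {A B K : Type*} [Nonempty A] [Nonempty B] [MetricSpace K] [CompactSpace K]
    (ε : ℝ) (hε : 0 < ε) (f : A × B → K) (hf : EpsStable ε f)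
    (γ δ : ℝ) (hδ : 0 < δ) (hδγ : δ < γ)
    (p : B → K) (hp : p ∈ TypeSpace f) :
    ∃ (n : ℕ) (a : Fin n → A), ∀ b c : B,
      (∀ i : Fin n, dist (f (a i, b)) (f (a i, c)) < δ) →
      dist (p b) (p c) < 2 * ε + γ := by
  classical
  by_contra hcon
  push_neg at hcon
  -- hcon : ∀ n (a : Fin n → A), ∃ b c, (∀ i, dist ... < δ) ∧ 2 * ε + γ ≤ dist (p b) (p c)
  set δ' : ℝ := (γ - δ) / 4 with hδ'def
  have hδ'pos : 0 < δ' := by rw [hδ'def]; linarith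
  -- From `p` in the closure: approximation of `p` by some `f (a, ·)` on any finite set.
  have happrox : ∀ t : Finset B, ∃ a : A, ∀ x ∈ t, dist (f (a, x)) (p x) < δ' := by
    intro t
    have hV : ∀ᶠ g in nhds p, ∀ x ∈ t, dist (g x) (p x) < δ' := by
      rw [Filter.eventually_all_finset]
      intro x _
      have hb : Metric.ball (p x) δ' ∈ nhds (p x) := Metric.ball_mem_nhds _ hδ'pos
      have := ((continuous_apply x).tendsto p) hb
      filter_upwards [this] with g hg
      exact Metric.mem_ball.mp hg
    obtain ⟨g, hg1, a, rfl⟩ := mem_closure_iff_nhds.mp hp _ hV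
    exact ⟨a, hg1⟩
  -- Build the sequences (aᵢ, bᵢ, cᵢ).
  obtain ⟨x, hxP, hxr⟩ := exists_seq_of_forall_finset_exists
    (P := fun x : A × B × B => 2 * ε + γ ≤ dist (p x.2.1) (p x.2.2))
    (r := fun x y =>
      dist (f (x.1, y.2.1)) (f (x.1, y.2.2)) < δ ∧
      dist (f (y.1, x.2.1)) (p x.2.1) < δ' ∧
      dist (f (y.1, x.2.2)) (p x.2.2) < δ')
    (by
      intro s _
      -- pick b, c defeating the tuple of first coordinates of s
      set e := s.equivFin with he
      obtain ⟨b, c, hbc1, hbc2⟩ := hcon s.card (fun i => ((e.symm i : s) : A × B × B).1)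
      -- pick a approximating p on all previous b's and c's
      obtain ⟨a, ha⟩ := happrox (s.image (fun x => x.2.1) ∪ s.image (fun x => x.2.2))
      refine ⟨(a, b, c), hbc2, ?_⟩
      intro x hx
      refine ⟨?_, ?_, ?_⟩
      · have := hbc1 (e ⟨x, hx⟩)
        simpa using this
      · exact ha _ (Finset.mem_union_left _ (Finset.mem_image_of_mem _ hx))
      · exact ha _ (Finset.mem_union_right _ (Finset.mem_image_of_mem _ hx)))
  set a : ℕ → A := fun i => (x i).1 with ha
  set b : ℕ → B := fun i => (x i).2.1 with hb
  set c : ℕ → B := fun i => (x i).2.2 with hc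
  -- key: for i < j, one of the two "order property" inequalities holds
  have key : ∀ i j, i < j →
      ε ≤ dist (f (a i, b j)) (f (a j, b i)) ∨ ε ≤ dist (f (a i, c j)) (f (a j, c i)) := by
    intro i j hij
    obtain ⟨hsmall, hb', hc'⟩ := hxr i j hij
    have hbig : 2 * ε + γ - 2 * δ' ≤ dist (f (a j, b i)) (f (a j, c i)) := by
      have hP := hxP i
      have htri : dist (p (b i)) (p (c i)) ≤
          dist (f (a j, b i)) (p (b i)) + dist (f (a j, b i)) (f (a j, c i)) +
          dist (f (a j, c i)) (p (c i)) := by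
        calc dist (p (b i)) (p (c i))
            ≤ dist (p (b i)) (f (a j, b i)) + dist (f (a j, b i)) (p (c i)) := dist_triangle _ _ _
          _ ≤ dist (p (b i)) (f (a j, b i)) + (dist (f (a j, b i)) (f (a j, c i)) +
              dist (f (a j, c i)) (p (c i))) := by
              gcongr
              exact dist_triangle _ _ _
          _ = _ := by rw [dist_comm (p (b i))]; ring
      linarith
    by_contra hcontra
    push_neg at hcontra
    obtain ⟨h1, h2⟩ := hcontra
    have htri2 : dist (f (a j, b i)) (f (a j, c i)) ≤
        dist (f (a i, b j)) (f (a j, b i)) + dist (f (a i, b j)) (f (a i, c j)) +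
        dist (f (a i, c j)) (f (a j, c i)) := by
      calc dist (f (a j, b i)) (f (a j, c i))
          ≤ dist (f (a j, b i)) (f (a i, c j)) + dist (f (a i, c j)) (f (a j, c i)) :=
            dist_triangle _ _ _
        _ ≤ (dist (f (a j, b i)) (f (a i, b j)) + dist (f (a i, b j)) (f (a i, c j))) +
            dist (f (a i, c j)) (f (a j, c i)) := by
            gcongr
            exact dist_triangle _ _ _
        _ = _ := by rw [dist_comm (f (a j, b i))]
    have : 2 * ε + γ - 2 * δ' ≤ ε + δ + ε := by linarith
    rw [hδ'def] at this
    linarith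
  -- Ramsey: extract a monochromatic subsequence
  obtain ⟨φ, v, hφ, hmono⟩ := ramsey_two
    (fun i j => decide (ε ≤ dist (f (a i, b j)) (f (a j, b i))))
  cases v with
  | true =>
    refine hf ⟨a ∘ φ, b ∘ φ, fun i j hij => ?_⟩
    have := hmono i j hij
    simpa using this
  | false =>
    refine hf ⟨a ∘ φ, c ∘ φ, fun i j hij => ?_⟩
    have hC := hmono i j hij
    have hC' : ¬ ε ≤ dist (f (a (φ i), b (φ j))) (f (a (φ j), b (φ i))) := by
      simpa using hC
    rcases key (φ i) (φ j) (hφ hij) with h | h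
    · exact absurd h hC'
    · exact h
end

section
/- Let X be a nonempty set, Y a metric space, f : X → ℝ a bounded function, g : X → Y a function, and ε, δ > 0. Suppose that whenever x, y ∈ X satisfy dist(g(x), g(y)) < δ, we have |f(x) − f(y)| < ε. Then there exists a function h : Y → ℝ such that (i) sup_{x ∈ X} |f(x) − h(g(x))| ≤ ε, (ii) h takes values in the interval [inf f(X), sup f(X)], and (iii) h is Lipschitz with constant D/δ, where D = sup f(X) − inf f(X); in particular h is uniformly continuous. -/
theorem stmt1 {X Y : Type*} [Nonempty X] [MetricSpace Y]
    (f : X → ℝ) (g : X → Y)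
    (hbddA : BddAbove (Set.range f)) (hbddB : BddBelow (Set.range f))
    (ε δ : ℝ) (hε : 0 < ε) (hδ : 0 < δ)
    (H : ∀ x y : X, dist (g x) (g y) < δ → |f x - f y| < ε) :
    ∃ h : Y → ℝ,
      (∀ x : X, |f x - h (g x)| ≤ ε) ∧
      (∀ y : Y, h y ∈ Set.Icc (sInf (Set.range f)) (sSup (Set.range f))) ∧
      LipschitzWith (Real.toNNReal ((sSup (Set.range f) - sInf (Set.range f)) / δ)) h ∧
      UniformContinuous h := by
  set m := sInf (Set.range f) with hm
  set M := sSup (Set.range f) with hM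
  have hfm : ∀ x, m ≤ f x := fun x => csInf_le hbddB ⟨x, rfl⟩
  have hfM : ∀ x, f x ≤ M := fun x => le_csSup hbddA ⟨x, rfl⟩
  have hmM : m ≤ M := (hfm (Classical.arbitrary X)).trans (hfM _)
  set L : NNReal := Real.toNNReal ((M - m) / δ) with hL
  have hLcoe : (L : ℝ) = (M - m) / δ :=
    Real.coe_toNNReal _ (div_nonneg (by linarith) hδ.le)
  have hLδ : (L : ℝ) * δ = M - m := by
    rw [hLcoe, div_mul_cancel₀]; exact hδ.ne'
  set h0 : Y → ℝ := fun y => ⨅ x : X, f x + (L : ℝ) * dist y (g x) with hh0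
  have B : ∀ y : Y, BddBelow (Set.range fun x : X => f x + (L : ℝ) * dist y (g x)) := by
    intro y
    refine ⟨m, ?_⟩
    rintro w ⟨x, rfl⟩
    have : (0:ℝ) ≤ (L : ℝ) * dist y (g x) := mul_nonneg L.2 dist_nonneg
    have := hfm x
    dsimp; linarith
  have h0le : ∀ x : X, h0 (g x) ≤ f x := by
    intro x
    have := ciInf_le (B (g x)) x
    simpa using this
  have h0ge : ∀ x : X, f x - ε ≤ h0 (g x) := by
    intro x
    refine le_ciInf fun x' => ?_
    by_cases hd : dist (g x) (g x') < δ
    · have := H x x' hd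
      have h1 : f x - f x' < ε := (abs_lt.mp this).2
      have : (0:ℝ) ≤ (L : ℝ) * dist (g x) (g x') := mul_nonneg L.2 dist_nonneg
      linarith
    · push_neg at hd
      have h1 : (L : ℝ) * δ ≤ (L : ℝ) * dist (g x) (g x') := by
        exact mul_le_mul_of_nonneg_left hd L.2
      have := hfm x'
      have := hfM x
      rw [hLδ] at h1
      linarith
  have h0lip : LipschitzWith L h0 := by
    refine LipschitzWith.of_le_add_mul L fun y z => ?_
    rw [← sub_le_iff_le_add]
    refine le_ciInf fun x => ?_
    rw [sub_le_iff_le_add]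
    calc h0 y ≤ f x + (L : ℝ) * dist y (g x) := ciInf_le (B y) x
      _ ≤ f x + (L : ℝ) * (dist y z + dist z (g x)) := by
          gcongr
          exact dist_triangle y z (g x)
      _ = f x + (L : ℝ) * dist z (g x) + (L : ℝ) * dist y z := by ring
  refine ⟨fun y => min (h0 y) M, fun x => ?_, fun y => ?_, ?_, ?_⟩
  · have h1 : min (h0 (g x)) M ≤ f x := (min_le_left _ _).trans (h0le x)
    have h2 : f x - ε ≤ min (h0 (g x)) M :=
      le_min (h0ge x) (by have := hfM x; linarith)
    rw [abs_le]; constructor <;> linarith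
  · constructor
    · refine le_min ?_ hmM
      refine le_ciInf fun x => ?_
      have : (0:ℝ) ≤ (L : ℝ) * dist y (g x) := mul_nonneg L.2 dist_nonneg
      have := hfm x
      linarith
    · exact min_le_right _ _
  · have := h0lip.min (LipschitzWith.const M)
    simpa using this
  · have : LipschitzWith L fun y => min (h0 y) M := by
      have := h0lip.min (LipschitzWith.const M)
      simpa using this
    exact this.uniformContinuous
end

section
/- Let A and B be nonempty sets, let K be a compact subset of the Banach space ℓ^∞ = lp (fun _ : ℕ => ℝ) ∞, let ε > 0, and let f : A × B → K be ε-stable. Fix real numbers γ > δ > 0 and let p : B → K belong to the type space S_f. Let D = sup {‖f(a,b) − f(a',b')‖ : a, a' ∈ A, b, b' ∈ B} (the diameter of the image of f). Then there exist n ∈ ℕ, points a₀, …, a_{n−1} ∈ A, and a map u : (Finن n → ℓ^∞) → ℓ^∞ that is Lipschitz with constant D/δ with respect to the sup metric on Fin n → ℓ^∞, such that ‖u(fun i => f(aᵢ, b)) − p(b)‖ ≤ 2ε + γ for every b ∈ B. -/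
open ENNReal Filter

theorem stmt2 {A B : Type*} [Nonempty A] [Nonempty B]
    (K : Set (lp (fun _ : ℕ => ℝ) ∞)) (hK : IsCompact K)
    (ε : ℝ) (hε : 0 < ε) (f : A × B → K)
    (hf : ¬ ∃ (a : ℕ → A) (b : ℕ → B), ∀ i j : ℕ, i < j →
      ε ≤ ‖(f (a i, b j) : lp (fun _ : ℕ => ℝ) ∞) - f (a j, b i)‖)
    (γ δ : ℝ) (hδ : 0 < δ) (hδγ : δ < γ)
    (p : B → K)
    (hp : p ∈ closure {g : B → K | ∃ a : A, g = fun b => f (a, b)})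
    (D : ℝ)
    (hD : D = sSup {d : ℝ | ∃ (a a' : A) (b b' : B),
      d = ‖(f (a, b) : lp (fun _ : ℕ => ℝ) ∞) - f (a', b')‖}) :
    ∃ (n : ℕ) (a : Fin n → A)
      (u : (Fin n → lp (fun _ : ℕ => ℝ) ∞) → lp (fun _ : ℕ => ℝ) ∞),
      LipschitzWith (Real.toNNReal (D / δ)) u ∧
      ∀ b : B, ‖u (fun i => (f (a i, b) : lp (fun _ : ℕ => ℝ) ∞)) - (p b : lp (fun _ : ℕ => ℝ) ∞)‖ ≤ 2 * ε + γ := by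
  classical
  obtain ⟨R, hR⟩ : ∃ R : ℝ, ∀ x ∈ K, ‖x‖ ≤ R := hK.isBounded.exists_norm_le
  have approx : ∀ (S : Finset B) (η : ℝ), 0 < η → ∃ a : A, ∀ b ∈ S,
      dist ((f (a, b) : lp (fun _ : ℕ => ℝ) ∞)) ((p b : lp (fun _ : ℕ => ℝ) ∞)) < η := by
    intro S η hη
    have hopen : IsOpen {g : B → K | ∀ b ∈ S, dist (g b) (p b) < η} := by
      have : {g : B → K | ∀ b ∈ S, dist (g b) (p b) < η}
          = ⋂ b ∈ S, (fun g : B → K => g b) ⁻¹' (Metric.ball (p b) η) := by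
        ext g; simp [Metric.mem_ball]
      rw [this]
      exact isOpen_biInter_finset fun b _ => (Metric.isOpen_ball).preimage (continuous_apply b)
    have hmem : p ∈ {g : B → K | ∀ b ∈ S, dist (g b) (p b) < η} := by
      intro b _; simpa using hη
    obtain ⟨g, hg1, hg2⟩ := _root_.mem_closure_iff.1 hp _ hopen hmem
    obtain ⟨a, rfl⟩ := hg2
    exact ⟨a, fun b hb => by simpa [Subtype.dist_eq] using hg1 b hb⟩

  have hbdd : BddAbove {d : ℝ | ∃ (a a' : A) (b b' : B),
      d = ‖(f (a, b) : lp (fun _ : ℕ => ℝ) ∞) - f (a', b')‖} := by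
    refine ⟨2 * R, ?_⟩
    rintro d ⟨a, a', b, b', rfl⟩
    calc ‖(f (a, b) : lp (fun _ : ℕ => ℝ) ∞) - f (a', b')‖
        ≤ ‖(f (a, b) : lp (fun _ : ℕ => ℝ) ∞)‖ + ‖(f (a', b') : lp (fun _ : ℕ => ℝ) ∞)‖ :=
          norm_sub_le _ _
      _ ≤ R + R := add_le_add (hR _ (f (a, b)).2) (hR _ (f (a', b')).2)
      _ = 2 * R := by ring
  have hDle : ∀ (a a' : A) (b b' : B),
      ‖(f (a, b) : lp (fun _ : ℕ => ℝ) ∞) - f (a', b')‖ ≤ D := by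
    intro a a' b b'
    rw [hD]
    exact le_csSup hbdd ⟨a, a', b, b', rfl⟩
  have hD0 : 0 ≤ D := by
    obtain ⟨a⟩ := ‹Nonempty A›; obtain ⟨b⟩ := ‹Nonempty B›
    exact le_trans (norm_nonneg _) (hDle a a b b)
  have hpD : ∀ b b' : B,
      dist ((p b : lp (fun _ : ℕ => ℝ) ∞)) ((p b' : lp (fun _ : ℕ => ℝ) ∞)) ≤ D := by
    intro b b'
    refine le_of_forall_pos_le_add fun η hη => ?_
    obtain ⟨a, ha⟩ := approx {b, b'} (η / 2) (by linarith)
    have h1 := ha b (by simp)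
    have h2 := ha b' (by simp)
    calc dist ((p b : lp (fun _ : ℕ => ℝ) ∞)) ((p b' : lp (fun _ : ℕ => ℝ) ∞))
        ≤ dist ((p b : lp (fun _ : ℕ => ℝ) ∞)) ((f (a, b) : lp (fun _ : ℕ => ℝ) ∞))
          + dist ((f (a, b) : lp (fun _ : ℕ => ℝ) ∞)) ((f (a, b') : lp (fun _ : ℕ => ℝ) ∞))
          + dist ((f (a, b') : lp (fun _ : ℕ => ℝ) ∞)) ((p b' : lp (fun _ : ℕ => ℝ) ∞)) :=
          dist_triangle4 _ _ _ _
      _ ≤ η / 2 + D + η / 2 := by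
          refine add_le_add (add_le_add ?_ ?_) ?_
          · rw [dist_comm]; exact (h1).le
          · rw [dist_eq_norm]; exact hDle a a b b'
          · exact (h2).le
      _ = D + η := by ring
  have main : ∃ (n : ℕ) (a : Fin n → A), ∀ b b' : B,
      (∀ i, dist ((f (a i, b) : lp (fun _ : ℕ => ℝ) ∞)) (f (a i, b')) ≤ δ) →
      dist ((p b : lp (fun _ : ℕ => ℝ) ∞)) ((p b' : lp (fun _ : ℕ => ℝ) ∞)) ≤ 4 * ε + 2 * γ := by
    by_contra hL
    push_neg at hL
    -- Step 1: build sequences (aseq, bseq, bseq')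
    have hstep : ∀ s : Finset (A × B × B),
        (∀ x ∈ s, 4 * ε + 2 * γ <
          dist ((p x.2.1 : lp (fun _ : ℕ => ℝ) ∞)) ((p x.2.2 : lp (fun _ : ℕ => ℝ) ∞))) →
        ∃ y : A × B × B, (4 * ε + 2 * γ <
          dist ((p y.2.1 : lp (fun _ : ℕ => ℝ) ∞)) ((p y.2.2 : lp (fun _ : ℕ => ℝ) ∞))) ∧
        ∀ x ∈ s,
        dist ((f (y.1, x.2.1) : lp (fun _ : ℕ => ℝ) ∞)) ((p x.2.1 : lp (fun _ : ℕ => ℝ) ∞)) ≤ δ/8 ∧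
        dist ((f (y.1, x.2.2) : lp (fun _ : ℕ => ℝ) ∞)) ((p x.2.2 : lp (fun _ : ℕ => ℝ) ∞)) ≤ δ/8 ∧
        dist ((f (x.1, y.2.1) : lp (fun _ : ℕ => ℝ) ∞)) ((f (x.1, y.2.2) : lp (fun _ : ℕ => ℝ) ∞)) ≤ δ := by
      intro s hs
      obtain ⟨a0, ha0⟩ := approx ((s.image fun x => x.2.1) ∪ (s.image fun x => x.2.2)) (δ/8)
        (by linarith)
      set l := s.toList with hl
      obtain ⟨b0, b0', hcond, hfar⟩ := hL (l.length + 1)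
        (fun i => if h : (i : ℕ) < l.length then (l.get ⟨i, h⟩).1 else a0)
      refine ⟨(a0, b0, b0'), hfar, ?_⟩
      intro x hx
      refine ⟨(ha0 x.2.1 (Finset.mem_union_left _ (Finset.mem_image_of_mem _ hx))).le,
        (ha0 x.2.2 (Finset.mem_union_right _ (Finset.mem_image_of_mem _ hx))).le, ?_⟩
      have hxl : x ∈ l := by rw [hl]; exact Finset.mem_toList.2 hx
      obtain ⟨j, hj⟩ := List.mem_iff_get.1 hxl
      have hj' : l[(j : ℕ)] = x := by simpa using hj
      have := hcond ⟨(j : ℕ), by omega⟩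
      simpa [j.2, hj'] using this
    obtain ⟨F, hFP, hFr⟩ := exists_seq_of_forall_finset_exists _ _ hstep
    set aseq : ℕ → A := fun m => (F m).1 with haseq
    set bseq : ℕ → B := fun m => (F m).2.1 with hbseq
    set bseq' : ℕ → B := fun m => (F m).2.2 with hbseq'
    have hreal : ∀ l m : ℕ, l < m →
        dist ((f (aseq m, bseq l) : lp (fun _ : ℕ => ℝ) ∞)) ((p (bseq l) : lp (fun _ : ℕ => ℝ) ∞)) ≤ δ/8 ∧
        dist ((f (aseq m, bseq' l) : lp (fun _ : ℕ => ℝ) ∞)) ((p (bseq' l) : lp (fun _ : ℕ => ℝ) ∞)) ≤ δ/8 :=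
      fun l m hlm => ⟨(hFr l m hlm).1, (hFr l m hlm).2.1⟩
    have hclose : ∀ l m : ℕ, l < m →
        dist ((f (aseq l, bseq m) : lp (fun _ : ℕ => ℝ) ∞)) ((f (aseq l, bseq' m) : lp (fun _ : ℕ => ℝ) ∞)) ≤ δ :=
      fun l m hlm => (hFr l m hlm).2.2
    have hfar : ∀ m : ℕ, 4 * ε + 2 * γ <
        dist ((p (bseq m) : lp (fun _ : ℕ => ℝ) ∞)) ((p (bseq' m) : lp (fun _ : ℕ => ℝ) ∞)) :=
      fun m => hFP m
    -- Step 2: ultrafilter limits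
    set U : Ultrafilter ℕ := Filter.hyperfilter ℕ with hU
    have hlim : ∀ g : ℕ → K, ∃ L ∈ K,
        Tendsto (fun m => (g m : lp (fun _ : ℕ => ℝ) ∞)) ↑U (nhds L) := by
      intro g
      have hle : ↑(U.map fun m => (g m : lp (fun _ : ℕ => ℝ) ∞)) ≤ Filter.principal K := by
        rw [Filter.le_principal_iff]
        exact Filter.mem_map.2 (Filter.mem_of_superset Filter.univ_mem fun m _ => (g m).2)
      obtain ⟨L, hLK, hL⟩ := hK.ultrafilter_le_nhds _ hle
      exact ⟨L, hLK, hL⟩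
    choose Lb hLbK hLb using fun i => hlim (fun m => f (aseq i, bseq m))
    choose Lb' hLbK' hLb' using fun i => hlim (fun m => f (aseq i, bseq' m))
    obtain ⟨Pt, hPtK, hPt⟩ := hlim (fun m => p (bseq m))
    obtain ⟨Pt', hPtK', hPt'⟩ := hlim (fun m => p (bseq' m))
    have hUatTop : (U : Filter ℕ) ≤ atTop := Nat.hyperfilter_le_atTop
    have hLL : ∀ i, dist (Lb i) (Lb' i) ≤ δ := by
      intro i
      refine le_of_tendsto ((hLb i).dist (hLb' i)) ?_
      exact hUatTop (eventually_atTop.2 ⟨i + 1, fun m hm => hclose i m (by omega)⟩)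
    have hPP : 4 * ε + 2 * γ ≤ dist Pt Pt' := by
      refine ge_of_tendsto (hPt.dist hPt') ?_
      exact Filter.Eventually.of_forall fun m => (hfar m).le
    have hside : ∀ i, 2*ε + γ - δ/2 ≤ dist (Lb i) Pt ∨ 2*ε + γ - δ/2 ≤ dist (Lb' i) Pt' := by
      intro i
      by_contra hcon
      push_neg at hcon
      have t1 : dist Pt Pt' ≤ dist Pt (Lb i) + dist (Lb i) (Lb' i) + dist (Lb' i) Pt' :=
        dist_triangle4 _ _ _ _
      rw [dist_comm Pt (Lb i)] at t1
      have := hLL i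
      linarith [hcon.1, hcon.2]
    -- the generic contradiction
    have key : ∀ (e : ℕ → B) (L : ℕ → lp (fun _ : ℕ => ℝ) ∞) (Q : lp (fun _ : ℕ => ℝ) ∞),
        (∀ l m : ℕ, l < m →
          dist ((f (aseq m, e l) : lp (fun _ : ℕ => ℝ) ∞)) ((p (e l) : lp (fun _ : ℕ => ℝ) ∞)) ≤ δ/8) →
        ({i : ℕ | 2*ε + γ - δ/2 ≤ dist (L i) Q}).Infinite →
        (∀ i, Tendsto (fun m => (f (aseq i, e m) : lp (fun _ : ℕ => ℝ) ∞)) ↑U (nhds (L i))) →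
        Tendsto (fun m => (p (e m) : lp (fun _ : ℕ => ℝ) ∞)) ↑U (nhds Q) → False := by
      intro e L Q hrealb hI hLt hQt
      set G : ℕ → Set ℕ := fun i => {m | dist ((f (aseq i, e m) : lp (fun _ : ℕ => ℝ) ∞)) (L i) ≤ δ/8}
        with hG
      have hGU : ∀ i, G i ∈ (U : Filter ℕ) := by
        intro i
        have := hLt i (Metric.closedBall_mem_nhds (L i) (by linarith : (0:ℝ) < δ/8))
        simpa [hG, Metric.mem_closedBall, Set.preimage, dist_comm] using this
      have hGpU : {m : ℕ | dist ((p (e m) : lp (fun _ : ℕ => ℝ) ∞)) Q ≤ δ/8} ∈ (U : Filter ℕ) := by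
        have := hQt (Metric.closedBall_mem_nhds Q (by linarith : (0:ℝ) < δ/8))
        simpa [Metric.mem_closedBall, Set.preimage] using this
      have hstep2 : ∀ s : Finset (ℕ × ℕ),
          (∀ x ∈ s, x.1 ∈ {i : ℕ | 2*ε + γ - δ/2 ≤ dist (L i) Q} ∧
            x.2 ∈ {m : ℕ | dist ((p (e m) : lp (fun _ : ℕ => ℝ) ∞)) Q ≤ δ/8}) →
          ∃ y : ℕ × ℕ, (y.1 ∈ {i : ℕ | 2*ε + γ - δ/2 ≤ dist (L i) Q} ∧
            y.2 ∈ {m : ℕ | dist ((p (e m) : lp (fun _ : ℕ => ℝ) ∞)) Q ≤ δ/8}) ∧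
          ∀ x ∈ s, x.2 < y.1 ∧ y.2 ∈ G x.1 := by
        intro s hs
        obtain ⟨i, hiI, hi⟩ := hI.exists_gt (s.sup fun x => x.2)
        have hT : ({m : ℕ | dist ((p (e m) : lp (fun _ : ℕ => ℝ) ∞)) Q ≤ δ/8} ∩
            ⋂ x ∈ s, G x.1) ∈ (U : Filter ℕ) :=
          Filter.inter_mem hGpU (Filter.biInter_finset_mem s |>.2 fun x _ => hGU x.1)
        obtain ⟨m, hm⟩ := Filter.nonempty_of_mem hT
        refine ⟨(i, m), ⟨hiI, hm.1⟩, ?_⟩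
        intro x hx
        refine ⟨lt_of_le_of_lt (Finset.le_sup (f := fun x : ℕ × ℕ => x.2) hx) hi, ?_⟩
        exact Set.mem_iInter₂.1 hm.2 x hx
      obtain ⟨F2, hP2, hr2⟩ := exists_seq_of_forall_finset_exists _ _ hstep2
      refine hf ⟨fun k => aseq ((F2 k).1), fun k => e ((F2 k).2), ?_⟩
      intro k l hkl
      obtain ⟨hkl1, hkl2⟩ := hr2 k l hkl
      have d1 : dist ((f (aseq ((F2 k).1), e ((F2 l).2)) : lp (fun _ : ℕ => ℝ) ∞)) (L ((F2 k).1))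
          ≤ δ/8 := hkl2
      have d2 : 2*ε + γ - δ/2 ≤ dist (L ((F2 k).1)) Q := (hP2 k).1
      have d3 : dist ((p (e ((F2 k).2)) : lp (fun _ : ℕ => ℝ) ∞)) Q ≤ δ/8 := (hP2 k).2
      have d4 : dist ((f (aseq ((F2 l).1), e ((F2 k).2)) : lp (fun _ : ℕ => ℝ) ∞))
          ((p (e ((F2 k).2)) : lp (fun _ : ℕ => ℝ) ∞)) ≤ δ/8 := hrealb _ _ hkl1
      set x := (f (aseq ((F2 k).1), e ((F2 l).2)) : lp (fun _ : ℕ => ℝ) ∞)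
      set y := (f (aseq ((F2 l).1), e ((F2 k).2)) : lp (fun _ : ℕ => ℝ) ∞)
      have t1 : dist (L ((F2 k).1)) Q ≤ dist (L ((F2 k).1)) x + dist x Q := dist_triangle _ _ _
      have t2 : dist x Q ≤ dist x y + dist y Q := dist_triangle _ _ _
      have t3 : dist y Q ≤ dist y ((p (e ((F2 k).2)) : lp (fun _ : ℕ => ℝ) ∞)) +
          dist ((p (e ((F2 k).2)) : lp (fun _ : ℕ => ℝ) ∞)) Q := dist_triangle _ _ _
      rw [dist_comm (L ((F2 k).1)) x] at t1
      rw [← dist_eq_norm]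
      linarith
    -- pick the infinite side
    have hunion : {i : ℕ | 2*ε + γ - δ/2 ≤ dist (Lb i) Pt} ∪
        {i : ℕ | 2*ε + γ - δ/2 ≤ dist (Lb' i) Pt'} = Set.univ := by
      ext i; simpa using hside i
    have hinf : ({i : ℕ | 2*ε + γ - δ/2 ≤ dist (Lb i) Pt}).Infinite ∨
        ({i : ℕ | 2*ε + γ - δ/2 ≤ dist (Lb' i) Pt'}).Infinite := by
      rw [← Set.infinite_union, hunion]
      exact Set.infinite_univ
    rcases hinf with h | h
    · exact key bseq Lb Pt (fun l m hlm => (hreal l m hlm).1) h hLb hPt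
    · exact key bseq' Lb' Pt' (fun l m hlm => (hreal l m hlm).2) h hLb' hPt'
  obtain ⟨n, a, hmain⟩ := main
  have ucon : ∃ (u : (Fin n → lp (fun _ : ℕ => ℝ) ∞) → lp (fun _ : ℕ => ℝ) ∞),
      LipschitzWith (Real.toNNReal (D / δ)) u ∧
      ∀ b : B, ‖u (fun i => (f (a i, b) : lp (fun _ : ℕ => ℝ) ∞)) - (p b : lp (fun _ : ℕ => ℝ) ∞)‖ ≤ 2 * ε + γ := by
    set Lr : ℝ := D / δ with hLr
    have hLr0 : 0 ≤ Lr := div_nonneg hD0 hδ.le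
    set t : B → (Fin n → lp (fun _ : ℕ => ℝ) ∞) := fun b i => f (a i, b) with ht
    have hpR : ∀ (b : B) (k : ℕ), |((p b : lp (fun _ : ℕ => ℝ) ∞) k)| ≤ R := by
      intro b k
      have h1 : ‖((p b : lp (fun _ : ℕ => ℝ) ∞)) k‖ ≤ ‖(p b : lp (fun _ : ℕ => ℝ) ∞)‖ :=
        lp.norm_apply_le_norm ENNReal.top_ne_zero _ k
      simpa [Real.norm_eq_abs] using h1.trans (hR _ (p b).2)
    -- the key approximate-Lipschitz estimate for p as a function of the tuple
    have keycoord : ∀ (b b' : B) (k : ℕ),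
        ((p b : lp (fun _ : ℕ => ℝ) ∞) k) - ((p b' : lp (fun _ : ℕ => ℝ) ∞) k)
          ≤ Lr * dist (t b) (t b') + (4 * ε + 2 * γ) := by
      intro b b' k
      have hcoord : ((p b : lp (fun _ : ℕ => ℝ) ∞) k) - ((p b' : lp (fun _ : ℕ => ℝ) ∞) k)
          ≤ dist ((p b : lp (fun _ : ℕ => ℝ) ∞)) ((p b' : lp (fun _ : ℕ => ℝ) ∞)) := by
        have h1 : ‖((p b : lp (fun _ : ℕ => ℝ) ∞) - (p b' : lp (fun _ : ℕ => ℝ) ∞)) k‖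
            ≤ ‖(p b : lp (fun _ : ℕ => ℝ) ∞) - (p b' : lp (fun _ : ℕ => ℝ) ∞)‖ :=
          lp.norm_apply_le_norm ENNReal.top_ne_zero _ k
        rw [lp.coeFn_sub, Pi.sub_apply, Real.norm_eq_abs] at h1
        rw [dist_eq_norm]
        exact (le_abs_self _).trans h1
      rcases le_or_gt (dist (t b) (t b')) δ with h | h
      · have hc := hmain b b' (fun i => le_trans (dist_le_pi_dist (t b) (t b') i) h)
        have : (0:ℝ) ≤ Lr * dist (t b) (t b') := mul_nonneg hLr0 dist_nonneg
        linarith [hcoord.trans hc]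
      · have h1 : dist ((p b : lp (fun _ : ℕ => ℝ) ∞)) ((p b' : lp (fun _ : ℕ => ℝ) ∞)) ≤ D :=
          hpD b b'
        have h2 : D ≤ Lr * dist (t b) (t b') := by
          have : Lr * δ ≤ Lr * dist (t b) (t b') := mul_le_mul_of_nonneg_left h.le hLr0
          rw [hLr, div_mul_cancel₀ D hδ.ne'] at this
          exact this
        have : (0:ℝ) ≤ 4 * ε + 2 * γ := by linarith
        linarith [hcoord.trans h1]
    -- definition of the McShane-type extension
    set w : (Fin n → lp (fun _ : ℕ => ℝ) ∞) → ℕ → ℝ := fun v k =>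
      sInf (Set.range fun b : B => ((p b : lp (fun _ : ℕ => ℝ) ∞) k) + Lr * dist v (t b)) + (2 * ε + γ)
      with hw
    have hbdd : ∀ (v : Fin n → lp (fun _ : ℕ => ℝ) ∞) (k : ℕ),
        BddBelow (Set.range fun b : B => ((p b : lp (fun _ : ℕ => ℝ) ∞) k) + Lr * dist v (t b)) := by
      intro v k
      refine ⟨-R, ?_⟩
      rintro x ⟨b, rfl⟩
      dsimp only
      have := (abs_le.1 (hpR b k)).1
      have h2 : (0:ℝ) ≤ Lr * dist v (t b) := mul_nonneg hLr0 dist_nonneg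
      linarith
    have hwle : ∀ (v : Fin n → lp (fun _ : ℕ => ℝ) ∞) (k : ℕ) (b : B),
        w v k ≤ ((p b : lp (fun _ : ℕ => ℝ) ∞) k) + Lr * dist v (t b) + (2 * ε + γ) := by
      intro v k b
      have := csInf_le (hbdd v k) (Set.mem_range_self b)
      rw [hw]; dsimp only; linarith
    have hlew : ∀ (v : Fin n → lp (fun _ : ℕ => ℝ) ∞) (k : ℕ) (z : ℝ),
        (∀ b : B, z ≤ ((p b : lp (fun _ : ℕ => ℝ) ∞) k) + Lr * dist v (t b)) →
        z + (2 * ε + γ) ≤ w v k := by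
      intro v k z hz
      have : z ≤ sInf (Set.range fun b : B => ((p b : lp (fun _ : ℕ => ℝ) ∞) k) + Lr * dist v (t b)) :=
        le_csInf (Set.range_nonempty _) (by rintro x ⟨b, rfl⟩; exact hz b)
      rw [hw]; dsimp only; linarith
    have hwlip : ∀ (v v' : Fin n → lp (fun _ : ℕ => ℝ) ∞) (k : ℕ),
        w v k ≤ w v' k + Lr * dist v v' := by
      intro v v' k
      have h1 : ∀ b : B, w v k - (2 * ε + γ) - Lr * dist v v'
          ≤ ((p b : lp (fun _ : ℕ => ℝ) ∞) k) + Lr * dist v' (t b) := by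
        intro b
        have h2 := hwle v k b
        have h3 : dist v (t b) ≤ dist v v' + dist v' (t b) := dist_triangle _ _ _
        have h4 : Lr * dist v (t b) ≤ Lr * dist v v' + Lr * dist v' (t b) := by
          calc Lr * dist v (t b) ≤ Lr * (dist v v' + dist v' (t b)) :=
                mul_le_mul_of_nonneg_left h3 hLr0
            _ = Lr * dist v v' + Lr * dist v' (t b) := by ring
        linarith
      have := hlew v' k _ h1
      linarith
    have habs : ∀ (v v' : Fin n → lp (fun _ : ℕ => ℝ) ∞) (k : ℕ),
        |w v k - w v' k| ≤ Lr * dist v v' := by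
      intro v v' k
      rw [abs_le]
      constructor
      · have := hwlip v' v k; rw [dist_comm v' v] at this; linarith
      · have := hwlip v v' k; linarith
    -- membership in lp ∞
    have hmem : ∀ v : Fin n → lp (fun _ : ℕ => ℝ) ∞, Memℓp (w v) ∞ := by
      intro v
      obtain ⟨b0⟩ := ‹Nonempty B›
      rw [memℓp_infty_iff]
      refine ⟨R + Lr * dist v (t b0) + (2 * ε + γ), ?_⟩
      rintro x ⟨k, rfl⟩
      dsimp only
      rw [Real.norm_eq_abs, abs_le]
      constructor
      · have h1 : -R ≤ ((p b0 : lp (fun _ : ℕ => ℝ) ∞) k) := (abs_le.1 (hpR b0 k)).1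
        have h2 := hlew v k (-R) (fun b => by
          have := (abs_le.1 (hpR b k)).1
          have h3 : (0:ℝ) ≤ Lr * dist v (t b) := mul_nonneg hLr0 dist_nonneg
          linarith)
        have h3 : (0:ℝ) ≤ Lr * dist v (t b0) := mul_nonneg hLr0 dist_nonneg
        linarith
      · have h1 := hwle v k b0
        have h2 : ((p b0 : lp (fun _ : ℕ => ℝ) ∞) k) ≤ R := (abs_le.1 (hpR b0 k)).2
        linarith
    set u : (Fin n → lp (fun _ : ℕ => ℝ) ∞) → lp (fun _ : ℕ => ℝ) ∞ := fun v => ⟨w v, hmem v⟩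
      with hu
    have hucoe : ∀ v, ⇑(u v) = w v := fun v => rfl
    refine ⟨u, ?_, ?_⟩
    · refine LipschitzWith.of_dist_le_mul fun v v' => ?_
      rw [dist_eq_norm]
      have hcoe : (Real.toNNReal (D / δ) : ℝ) = Lr := Real.coe_toNNReal _ hLr0
      rw [hcoe]
      refine lp.norm_le_of_forall_le (mul_nonneg hLr0 dist_nonneg) fun k => ?_
      rw [lp.coeFn_sub, Pi.sub_apply, hucoe, hucoe, Real.norm_eq_abs]
      exact habs v v' k
    · intro b
      refine lp.norm_le_of_forall_le (by linarith) fun k => ?_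
      rw [lp.coeFn_sub, Pi.sub_apply, hucoe, Real.norm_eq_abs, abs_le]
      constructor
      · have h1 := hlew (t b) k (((p b : lp (fun _ : ℕ => ℝ) ∞) k) - (4 * ε + 2 * γ)) (fun b' => by
          have := keycoord b b' k
          linarith)
        linarith
      · have h1 := hwle (t b) k b
        have h2 : dist (t b) (t b) = 0 := dist_self _
        rw [h2] at h1
        linarith
  obtain ⟨u, hu1, hu2⟩ := ucon
  exact ⟨n, a, u, hu1, hu2⟩
end

section
/- Let A and B be sets, B₀ ⊆ B a subset, K a compact metric space, and f : A × B → K a function. Let res : (B → K) → (B₀ → K) denote restriction. Suppose p : B₀ → K belongs to the closure, in the product topology on B₀ → K, of the set {res (fun b => f(a, b)) : a ∈ A}. Then there exists q : B → K extending p (i.e., res q = p) that belongs to the closure, in the product topology on B → K, of the set {fun b => f(a, b) : a ∈ A}. -/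
theorem stmt3 {A B K : Type*} [MetricSpace K] [CompactSpace K]
    (B₀ : Set B) (f : A × B → K)
    (res : (B → K) → (B₀ → K)) (hres : res = fun q => fun b => q ↑b)
    (p : B₀ → K)
    (hp : p ∈ closure {g : B₀ → K | ∃ a : A, g = res (fun b => f (a, b))}) :
    ∃ q : B → K, res q = p ∧
      q ∈ closure {g : B → K | ∃ a : A, g = fun b => f (a, b)} := by
  subst hres
  have hc : Continuous (fun q : B → K => fun b : B₀ => q ↑b) :=
    continuous_pi fun b => continuous_apply _
  set S : Set (B → K) := {g | ∃ a : A, g = fun b => f (a, b)} with hS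
  have hcomp : IsCompact (closure S) := isClosed_closure.isCompact
  have himg : IsCompact ((fun q : B → K => fun b : B₀ => q ↑b) '' closure S) :=
    hcomp.image hc
  have hclosed : IsClosed ((fun q : B → K => fun b : B₀ => q ↑b) '' closure S) :=
    himg.isClosed
  have hsub : {g : B₀ → K | ∃ a : A, g = (fun q : B → K => fun b : B₀ => q ↑b) (fun b => f (a, b))}
      ⊆ (fun q : B → K => fun b : B₀ => q ↑b) '' closure S := by
    rintro g ⟨a, rfl⟩
    exact ⟨fun b => f (a, b), subset_closure ⟨a, rfl⟩, rfl⟩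
  have := closure_minimal hsub hclosed hp
  obtain ⟨q, hq, hqp⟩ := this
  exact ⟨q, hqp, hq⟩
end

section
/- Let A and B be sets with subsets A₀ ⊆ A and B₀ ⊆ B, let K be a compact subset of the Banach space ℓ^∞ = lp (fun _ : ℕ => ℝ) ∞, let ε > 0, and let f : A × B → K be such that its restriction to A₀ × B₀ is ε-stable. Let q : B → K belong to the closure, in the product topology on B → K, of {fun b => f(a, b) : a ∈ A₀}. Let ψ : B → ℓ^∞ be a function satisfying the approximation property: for every b ∈ B, every finite set S ⊆ A₀ and every γ > 0, there exists b' ∈ B₀ with ‖ψ(b') − ψ(b)‖ < γ and ‖f(a, b') − f(a, b)‖ < γ for all a ∈ S. If δ > 0 is such that ‖q(b) − ψ(b)‖ ≤ δ for all b ∈ B₀, then ‖q(b) − ψ(b)‖ ≤ δ + ε for all b ∈ B. -/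
open ENNReal

noncomputable def mySeq {X : Type*} (g : ℕ → (ℕ → X) → X) (x₀ : X) : ℕ → X :=
  fun n => g n (fun i => if h : i < n then mySeq g x₀ i else x₀)
termination_by n => n
decreasing_by exact h

theorem mySeq_def {X : Type*} (g : ℕ → (ℕ → X) → X) (x₀ : X) (n : ℕ) :
    mySeq g x₀ n = g n (fun i => if _ : i < n then mySeq g x₀ i else x₀) := by
  rw [mySeq]

theorem stmt4 {A B : Type*} (A₀ : Set A) (B₀ : Set B)
    (K : Set (lp (fun _ : ℕ => ℝ) ∞)) (hK : IsCompact K)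
    (ε : ℝ) (hε : 0 < ε) (f : A × B → K)
    (hf : ¬ ∃ (a : ℕ → A₀) (b : ℕ → B₀), ∀ i j : ℕ, i < j →
      ε ≤ ‖(f (↑(a i), ↑(b j)) : lp (fun _ : ℕ => ℝ) ∞) - f (↑(a j), ↑(b i))‖)
    (q : B → K)
    (hq : q ∈ closure {g : B → K | ∃ a ∈ A₀, g = fun b => f (a, b)})
    (ψ : B → lp (fun _ : ℕ => ℝ) ∞)
    (happrox : ∀ b : B, ∀ S : Finset A, ↑S ⊆ A₀ → ∀ γ : ℝ, 0 < γ →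
      ∃ b' ∈ B₀, ‖ψ b' - ψ b‖ < γ ∧
        ∀ a ∈ S, ‖(f (a, b') : lp (fun _ : ℕ => ℝ) ∞) - f (a, b)‖ < γ)
    (δ : ℝ) (hδ : 0 < δ)
    (hqψ : ∀ b ∈ B₀, ‖(q b : lp (fun _ : ℕ => ℝ) ∞) - ψ b‖ ≤ δ) :
    ∀ b : B, ‖(q b : lp (fun _ : ℕ => ℝ) ∞) - ψ b‖ ≤ δ + ε := by
  classical
  intro b₁
  by_contra hcon
  push_neg at hcon
  set η : ℝ := (‖(q b₁ : lp (fun _ : ℕ => ℝ) ∞) - ψ b₁‖ - (δ + ε)) / 4 with hηdef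
  have hη : 0 < η := by simp only [hηdef]; linarith
  -- nonemptiness to get a default element
  obtain ⟨g₀, a₀, ha₀, -⟩ := closure_nonempty_iff.mp ⟨q, hq⟩
  obtain ⟨b₀, hb₀, -⟩ := happrox b₁ ∅ (by simp) 1 one_pos
  set x₀ : ↥A₀ × ↥B₀ := (⟨a₀, ha₀⟩, ⟨b₀, hb₀⟩) with hx₀
  -- existence of the next pair given the previous ones
  have hex : ∀ (n : ℕ) (prev : ℕ → ↥A₀ × ↥B₀), ∃ pair : ↥A₀ × ↥B₀,
      (∀ i < n, ‖(f (↑pair.1, ↑((prev i).2)) : lp (fun _ : ℕ => ℝ) ∞)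
          - q ↑((prev i).2)‖ < η) ∧
      ‖(f (↑pair.1, b₁) : lp (fun _ : ℕ => ℝ) ∞) - q b₁‖ < η ∧
      ‖ψ ↑pair.2 - ψ b₁‖ < η ∧
      (∀ i < n, ‖(f (↑((prev i).1), ↑pair.2) : lp (fun _ : ℕ => ℝ) ∞)
          - f (↑((prev i).1), b₁)‖ < η) ∧
      ‖(f (↑pair.1, ↑pair.2) : lp (fun _ : ℕ => ℝ) ∞) - f (↑pair.1, b₁)‖ < η := by
    intro n prev
    set T : Finset B := insert b₁ ((Finset.range n).image (fun i => ↑((prev i).2))) with hT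
    set U : Set (B → K) := {g | ∀ b' ∈ T, dist (g b') (q b') < η} with hU
    have hUopen : IsOpen U := by
      have : U = ⋂ b' ∈ (T : Set B), (fun g : B → K => g b') ⁻¹' Metric.ball (q b') η := by
        ext g
        simp [hU, Set.mem_iInter, Metric.mem_ball, dist_comm]
      rw [this]
      exact T.finite_toSet.isOpen_biInter
        (fun b' _ => (Metric.isOpen_ball).preimage (continuous_apply b'))
    have hqU : q ∈ U := by
      intro b' _
      simpa using hη
    obtain ⟨g, hgU, hgs⟩ := mem_closure_iff.mp hq U hUopen hqU
    obtain ⟨a, haA, rfl⟩ := hgs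
    set S : Finset A := insert a ((Finset.range n).image (fun i => ↑((prev i).1))) with hSdef
    have hS : (↑S : Set A) ⊆ A₀ := by
      intro x hx
      rcases Finset.mem_insert.mp (Finset.mem_coe.mp hx) with rfl | hx'
      · exact haA
      · obtain ⟨i, -, rfl⟩ := Finset.mem_image.mp hx'
        exact ((prev i).1).2
    obtain ⟨b', hb'B, hψ', hf'⟩ := happrox b₁ S hS η hη
    refine ⟨(⟨a, haA⟩, ⟨b', hb'B⟩), ?_, ?_, hψ', ?_, ?_⟩
    · intro i hi
      have hm : (↑((prev i).2) : B) ∈ T :=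
        Finset.mem_insert_of_mem (Finset.mem_image.mpr ⟨i, Finset.mem_range.mpr hi, rfl⟩)
      have h := hgU _ hm
      simp only at h
      rwa [Subtype.dist_eq, dist_eq_norm] at h
    · have h := hgU b₁ (Finset.mem_insert_self _ _)
      simp only at h
      rwa [Subtype.dist_eq, dist_eq_norm] at h
    · intro i hi
      exact hf' _ (Finset.mem_insert_of_mem
        (Finset.mem_image.mpr ⟨i, Finset.mem_range.mpr hi, rfl⟩))
    · exact hf' a (Finset.mem_insert_self _ _)
  set p : ℕ → ↥A₀ × ↥B₀ := mySeq (fun n prev => (hex n prev).choose) x₀ with hpdef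
  have hp : ∀ n : ℕ,
      (∀ i < n, ‖(f (↑(p n).1, ↑((p i).2)) : lp (fun _ : ℕ => ℝ) ∞)
          - q ↑((p i).2)‖ < η) ∧
      ‖(f (↑(p n).1, b₁) : lp (fun _ : ℕ => ℝ) ∞) - q b₁‖ < η ∧
      ‖ψ ↑(p n).2 - ψ b₁‖ < η ∧
      (∀ i < n, ‖(f (↑((p i).1), ↑(p n).2) : lp (fun _ : ℕ => ℝ) ∞)
          - f (↑((p i).1), b₁)‖ < η) ∧
      ‖(f (↑(p n).1, ↑(p n).2) : lp (fun _ : ℕ => ℝ) ∞) - f (↑(p n).1, b₁)‖ < η := by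
    intro n
    have hpn : p n = (hex n (fun i => if _ : i < n then p i else x₀)).choose := by
      rw [hpdef, mySeq_def]
    have h := (hex n (fun i => if _ : i < n then p i else x₀)).choose_spec
    rw [← hpn] at h
    refine ⟨fun i hi => ?_, h.2.1, h.2.2.1, fun i hi => ?_, h.2.2.2.2⟩
    · have := h.1 i hi
      rwa [dif_pos hi] at this
    · have := h.2.2.2.1 i hi
      rwa [dif_pos hi] at this
  apply hf
  refine ⟨fun n => (p n).1, fun n => (p n).2, fun i j hij => ?_⟩
  have h1 := (hp j).1 i hij
  have h2 := (hp i).2.1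
  have h3 := (hp i).2.2.1
  have h4 := (hp j).2.2.2.1 i hij
  have h5 := hqψ ↑((p i).2) ((p i).2).2
  have hQ : δ + ε + 4 * η = ‖(q b₁ : lp (fun _ : ℕ => ℝ) ∞) - ψ b₁‖ := by
    simp only [hηdef]; ring
  set x : lp (fun _ : ℕ => ℝ) ∞ := ↑(f (↑((p i).1), ↑((p j).2)))
  set y : lp (fun _ : ℕ => ℝ) ∞ := ↑(f (↑((p j).1), ↑((p i).2)))
  have T1 : ‖(q b₁ : lp (fun _ : ℕ => ℝ) ∞) - ψ b₁‖
      ≤ ‖(q b₁ : lp (fun _ : ℕ => ℝ) ∞) - x‖ + ‖x - y‖ + ‖y - ψ b₁‖ := by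
    have := dist_triangle4 (q b₁ : lp (fun _ : ℕ => ℝ) ∞) x y (ψ b₁)
    simpa only [dist_eq_norm] using this
  have T2 : ‖(q b₁ : lp (fun _ : ℕ => ℝ) ∞) - x‖
      ≤ ‖(q b₁ : lp (fun _ : ℕ => ℝ) ∞) - f (↑((p i).1), b₁)‖
        + ‖(f (↑((p i).1), b₁) : lp (fun _ : ℕ => ℝ) ∞) - x‖ := by
    have := dist_triangle (q b₁ : lp (fun _ : ℕ => ℝ) ∞)
      (f (↑((p i).1), b₁) : lp (fun _ : ℕ => ℝ) ∞) x
    simpa only [dist_eq_norm] using this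
  have T3 : ‖y - ψ b₁‖ ≤ ‖y - q ↑((p i).2)‖
      + ‖(q ↑((p i).2) : lp (fun _ : ℕ => ℝ) ∞) - ψ ↑((p i).2)‖
      + ‖ψ ↑((p i).2) - ψ b₁‖ := by
    have := dist_triangle4 y (q ↑((p i).2) : lp (fun _ : ℕ => ℝ) ∞)
      (ψ ↑((p i).2)) (ψ b₁)
    simpa only [dist_eq_norm] using this
  have e1 : ‖(q b₁ : lp (fun _ : ℕ => ℝ) ∞) - f (↑((p i).1), b₁)‖
      = ‖(f (↑((p i).1), b₁) : lp (fun _ : ℕ => ℝ) ∞) - q b₁‖ := norm_sub_rev _ _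
  have e2 : ‖(f (↑((p i).1), b₁) : lp (fun _ : ℕ => ℝ) ∞) - x‖
      = ‖x - f (↑((p i).1), b₁)‖ := norm_sub_rev _ _
  linarith
end

section
/- Let A and B be nonempty sets, K a compact subset of the Banach space ℓ^∞ = lp (fun _ : ℕ => ℝ) ∞, ε > 0, and f : A × B → K an ε-stable function. Let p : B → K belong to the closure of {fun b => f(a, b) : a ∈ A} in the product topology on B → K, and let q : A → K belong to the closure of {fun a => f(a, b) : b ∈ B} in the product topology on A → K. Suppose there are n, m ∈ ℕ, points a₀, …, a_{n−1} ∈ A and b₀, …, b_{m−1} ∈ B, continuous maps u : (Fin n → K) → ℓ^∞ and v : (Fin m → K) → ℓ^∞, and δ_p, δ_q > 0 such that ‖u(fun i => f(aᵢ, b)) − p(b)‖ ≤ δ_p for all b ∈ B, and ‖v(fun j => f(a, bⱼ)) − q(a)‖ ≤ δ_q for all a ∈ A. Then ‖u(fun i => q(aᵢ)) − v(fun j => p(bⱼ))‖ ≤ δ_p + δ_q + ε. -/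
open ENNReal

theorem stmt5 {A B : Type*} [Nonempty A] [Nonempty B]
    (K : Set (lp (fun _ : ℕ => ℝ) ∞)) (hK : IsCompact K)
    (ε : ℝ) (hε : 0 < ε) (f : A × B → K)
    (hf : ¬ ∃ (a : ℕ → A) (b : ℕ → B), ∀ i j : ℕ, i < j →
      ε ≤ ‖(f (a i, b j) : lp (fun _ : ℕ => ℝ) ∞) - f (a j, b i)‖)
    (p : B → K) (hp : p ∈ closure {g : B → K | ∃ a : A, g = fun b => f (a, b)})
    (q : A → K) (hq : q ∈ closure {g : A → K | ∃ b : B, g = fun a => f (a, b)})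
    (n m : ℕ) (a : Fin n → A) (b : Fin m → B)
    (u : (Fin n → K) → lp (fun _ : ℕ => ℝ) ∞)
    (v : (Fin m → K) → lp (fun _ : ℕ => ℝ) ∞)
    (hu : Continuous u) (hv : Continuous v)
    (δp δq : ℝ) (hδp : 0 < δp) (hδq : 0 < δq)
    (hup : ∀ b' : B, ‖u (fun i => f (a i, b')) - (p b' : lp (fun _ : ℕ => ℝ) ∞)‖ ≤ δp)
    (hvq : ∀ a' : A, ‖v (fun j => f (a', b j)) - (q a' : lp (fun _ : ℕ => ℝ) ∞)‖ ≤ δq) :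
    ‖u (fun i => q (a i)) - v (fun j => p (b j))‖ ≤ δp + δq + ε := by
  classical
  haveI : CompactSpace K := isCompact_iff_compactSpace.mp hK
  rw [← dist_eq_norm]
  refine le_of_forall_pos_le_add fun σ hσ => ?_
  obtain ⟨ηu, hηu, Hu⟩ := Metric.uniformContinuous_iff.mp
    (CompactSpace.uniformContinuous_of_continuous hu) (σ/4) (by positivity)
  obtain ⟨ηv, hηv, Hv⟩ := Metric.uniformContinuous_iff.mp
    (CompactSpace.uniformContinuous_of_continuous hv) (σ/4) (by positivity)
  set η := min (min ηu ηv) (σ/8) with hη_def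
  have hη : 0 < η := lt_min (lt_min hηu hηv) (by positivity)
  have hηu' : η ≤ ηu := le_trans (min_le_left _ _) (min_le_left _ _)
  have hηv' : η ≤ ηv := le_trans (min_le_left _ _) (min_le_right _ _)
  have hησ : η ≤ σ/8 := min_le_right _ _
  -- approximations from closures
  have hA : ∀ F : Finset B, ∃ a0 : A, ∀ b' ∈ F, dist (f (a0, b')) (p b') < η := by
    intro F
    have ht : (↑F : Set B).pi (fun b' => Metric.ball (p b') η) ∈ nhds p :=
      set_pi_mem_nhds F.finite_toSet (fun b' _ => Metric.ball_mem_nhds _ hη)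
    obtain ⟨g, hgt, a0, rfl⟩ := mem_closure_iff_nhds.mp hp _ ht
    exact ⟨a0, fun b' hb' => by simpa [dist_comm] using hgt b' hb'⟩
  have hB : ∀ F : Finset A, ∃ b0 : B, ∀ a' ∈ F, dist (f (a', b0)) (q a') < η := by
    intro F
    have ht : (↑F : Set A).pi (fun a' => Metric.ball (q a') η) ∈ nhds q :=
      set_pi_mem_nhds F.finite_toSet (fun a' _ => Metric.ball_mem_nhds _ hη)
    obtain ⟨g, hgt, b0, rfl⟩ := mem_closure_iff_nhds.mp hq _ ht
    exact ⟨b0, fun a' ha' => by simpa [dist_comm] using hgt a' ha'⟩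
  -- build the sequence
  set P : A × B → Prop := fun x =>
    (∀ j : Fin m, dist (f (x.1, b j)) (p (b j)) < η) ∧
    (∀ i : Fin n, dist (f (a i, x.2)) (q (a i)) < η) with hP_def
  set r : A × B → A × B → Prop := fun x y =>
    dist (f (y.1, x.2)) (p x.2) < η ∧ dist (f (x.1, y.2)) (q x.1) < η with hr_def
  obtain ⟨c, hcP, hcr⟩ := exists_seq_of_forall_finset_exists P r (by
    intro s _
    obtain ⟨a0, ha0⟩ := hA (Finset.image b Finset.univ ∪ s.image Prod.snd)
    obtain ⟨b0, hb0⟩ := hB (Finset.image a Finset.univ ∪ s.image Prod.fst)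
    refine ⟨(a0, b0), ⟨fun j => ha0 _ (by simp), fun i => hb0 _ (by simp)⟩,
      fun x hx => ⟨ha0 _ ?_, hb0 _ ?_⟩⟩
    · exact Finset.mem_union_right _ (Finset.mem_image_of_mem _ hx)
    · exact Finset.mem_union_right _ (Finset.mem_image_of_mem _ hx))
  push_neg at hf
  obtain ⟨i, j, hij, hlt⟩ := hf (fun k => (c k).1) (fun k => (c k).2)
  obtain ⟨hr1, hr2⟩ := hcr i j hij
  set α := (c i).1
  set β := (c i).2
  -- key estimate : dist (q α) (p β) < ε + 2η
  have key : dist (q α : lp (fun _ : ℕ => ℝ) ∞) (p β) < ε + 2 * η := by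
    have h1 : dist ((q α : K) : lp (fun _ : ℕ => ℝ) ∞) (f (α, (c j).2)) < η := by
      rw [← Subtype.dist_eq, dist_comm]; exact hr2
    have h2 : dist ((f (α, (c j).2) : K) : lp (fun _ : ℕ => ℝ) ∞) (f ((c j).1, β)) < ε := by
      rw [dist_eq_norm]; exact hlt
    have h3 : dist ((f ((c j).1, β) : K) : lp (fun _ : ℕ => ℝ) ∞) (p β) < η := by
      rw [← Subtype.dist_eq]; exact hr1
    calc dist (q α : lp (fun _ : ℕ => ℝ) ∞) (p β)
        ≤ dist ((q α : K) : lp (fun _ : ℕ => ℝ) ∞) (f (α, (c j).2))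
          + dist ((f (α, (c j).2) : K) : lp (fun _ : ℕ => ℝ) ∞) (f ((c j).1, β))
          + dist ((f ((c j).1, β) : K) : lp (fun _ : ℕ => ℝ) ∞) (p β) := dist_triangle4 _ _ _ _
      _ < η + ε + η := by linarith
      _ = ε + 2 * η := by ring
  obtain ⟨hPi1, hPi2⟩ := hcP i
  -- u-step
  have hu1 : dist (u (fun i' => q (a i'))) (u (fun i' => f (a i', β))) < σ/4 := by
    refine Hu ((dist_pi_lt_iff hηu).2 fun i' => ?_)
    rw [dist_comm]
    exact lt_of_lt_of_le (hPi2 i') hηu'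
  have hu2 : dist (u (fun i' => f (a i', β))) ((p β : lp (fun _ : ℕ => ℝ) ∞)) ≤ δp := by
    rw [dist_eq_norm]; exact hup β
  -- v-step
  have hv1 : dist (v (fun j' => f (α, b j'))) (v (fun j' => p (b j'))) < σ/4 :=
    Hv ((dist_pi_lt_iff hηv).2 fun j' => lt_of_lt_of_le (hPi1 j') hηv')
  have hv2 : dist ((q α : lp (fun _ : ℕ => ℝ) ∞)) (v (fun j' => f (α, b j'))) ≤ δq := by
    rw [dist_comm, dist_eq_norm]; exact hvq α
  calc dist (u fun i => q (a i)) (v fun j => p (b j))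
      ≤ dist (u fun i' => q (a i')) (u (fun i' => f (a i', β)))
        + dist (u (fun i' => f (a i', β))) ((p β : lp (fun _ : ℕ => ℝ) ∞))
        + dist ((p β : lp (fun _ : ℕ => ℝ) ∞)) (v fun j => p (b j)) := dist_triangle4 _ _ _ _
    _ ≤ dist (u fun i' => q (a i')) (u (fun i' => f (a i', β)))
        + dist (u (fun i' => f (a i', β))) ((p β : lp (fun _ : ℕ => ℝ) ∞))
        + (dist ((p β : lp (fun _ : ℕ => ℝ) ∞)) (q α)
          + dist ((q α : lp (fun _ : ℕ => ℝ) ∞)) (v (fun j' => f (α, b j')))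
          + dist (v (fun j' => f (α, b j'))) (v fun j => p (b j))) := by
          gcongr; exact dist_triangle4 _ _ _ _
    _ ≤ σ/4 + δp + ((ε + 2 * η) + δq + σ/4) := by
          have key' : dist ((p β : lp (fun _ : ℕ => ℝ) ∞)) (q α) < ε + 2 * η := by
            rwa [dist_comm] at key
          gcongr <;> first | exact hu1.le | exact hu2 | exact key'.le | exact hv2 | exact hv1.le
    _ ≤ δp + δq + ε + σ := by linarith
end

section
/- Let A and B be nonempty sets, K a compact subset of the Banach space ℓ^∞ = lp (fun _ : ℕ => ℝ) ∞, ε > 0, and f : A × B → K an ε-stable function. Let p : B → K belong to the closure of {fun b => f(a, b) : a ∈ A} in the product topology on B → K, and let q : A → K belong to the closure of {fun a => f(a, b) : b ∈ B} in the product topology on A → K. Then for every γ > 0 there exist n, m ∈ ℕ, points a₀, …, a_{n−1} ∈ A and b₀, …, b_{m−1} ∈ B, and continuous maps u : (Fin n → K) → ℓ^∞ and v : (Fin m → K) → ℓ^∞ such that (i) ‖u(fun i => f(aᵢ, b)) − p(b)‖ ≤ 2ε + γ/2 for all b ∈ B, (ii) ‖v(fun j => f(a, bⱼ)) − q(a)‖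 ≤ 2ε + γ/2 for all a ∈ A, and (iii) ‖u(fun i => q(aᵢ)) − v(fun j => p(bⱼ))‖ ≤ 5ε + γ. -/
/-!
Stability makes the row-limit `p` definable: finitely many rows `a₀, …, a_{n-1}` determine `p` up
to `2ε`, for otherwise limits along an ultrafilter in the compact `K` produce an `ε`-unstable
sequence. A partition of unity on the compact space `Fin n → K` turns this determination into a
continuous `u`, and likewise `v` for `q`. For (iii), stability also forces `q a' ≈ p b'` up to `ε`
for some `a'`, `b'` that approximate `q` on the `aᵢ` and `p` on the `bⱼ`; the triangle inequality
through `u (f (aᵢ, b'))` and `v (f (a', bⱼ))` then gives `5ε`.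
-/

open ENNReal Filter Topology Set

local notation "ℓ∞" => lp (fun _ : ℕ => ℝ) ∞

section Stability

variable {A B X : Type*} [PseudoMetricSpace X] {ε η : ℝ} {φ : A → B → X}

theorem exists_forall_dist_lt_of_mem_closure_range {p : B → X} (hp : p ∈ closure (range φ))
    (s : Finset B) {δ : ℝ} (hδ : 0 < δ) : ∃ a, ∀ b ∈ s, dist (φ a b) (p b) < δ := by
  have hU : (s : Set B).pi (fun b => Metric.ball (p b) δ) ∈ 𝓝 p :=
    set_pi_mem_nhds s.finite_toSet fun b _ => Metric.ball_mem_nhds _ hδ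
  obtain ⟨_, hg, a, rfl⟩ := mem_closure_iff_nhds.mp hp _ hU
  exact ⟨a, hg⟩

def IsStable (ε : ℝ) (φ : A → B → X) : Prop :=
  ¬ ∃ (a : ℕ → A) (b : ℕ → B), ∀ i j, i < j → ε ≤ dist (φ (a i) (b j)) (φ (a j) (b i))

theorem IsStable.flip (hφ : IsStable ε φ) : IsStable ε fun b a => φ a b := fun ⟨b, a, h⟩ =>
  hφ ⟨a, b, fun i j hij => by rw [dist_comm]; exact h i j hij⟩

theorem IsStable.exists_dist_lt (hφ : IsStable ε φ) {a : ℕ → A} {b : ℕ → B} {x y : ℕ → X}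
    (hx : ∀ m m', m < m' → dist (φ (a m) (b m')) (x m) ≤ η)
    (hy : ∀ m m', m < m' → dist (φ (a m') (b m)) (y m) ≤ η) :
    ∃ m, dist (x m) (y m) < ε + 2 * η := by
  by_contra! hfar
  refine hφ ⟨a, b, fun i j hij => ?_⟩
  have := dist_triangle4 (x i) (φ (a i) (b j)) (φ (a j) (b i)) (y i)
  linarith [hfar i, hx i j hij, hy i j hij, dist_comm (x i) (φ (a i) (b j))]

theorem IsStable.eventually_dist_lt (hφ : IsStable ε φ) {p : B → X} {l : Filter ℕ} [l.NeBot]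
    {a : ℕ → A} {c : ℕ → B} {V : ℕ → X} {P : X}
    (hV : ∀ i, Tendsto (fun k => φ (a i) (c k)) l (𝓝 (V i)))
    (hP : Tendsto (fun k => p (c k)) l (𝓝 P))
    (happ : ∀ k i, k < i → dist (φ (a i) (c k)) (p (c k)) ≤ η) (hη : 0 < η) :
    ∀ᶠ i in atTop, dist (V i) P < ε + 3 * η := by
  by_contra h
  have hfar := frequently_atTop.mp (not_eventually.mp h)
  obtain ⟨g, hg, hgr⟩ := exists_seq_of_forall_finset_exists
    (fun x : ℕ × ℕ => ε + 3 * η ≤ dist (V x.1) P ∧ dist (p (c x.2)) P ≤ η)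
    (fun x y => x.2 < y.1 ∧ dist (φ (a x.1) (c y.2)) (V x.1) ≤ η) (by
      intro s _
      obtain ⟨i, hi, hiV⟩ := hfar (s.sup Prod.snd + 1)
      obtain ⟨k, hkP, hkV⟩ := ((Metric.tendsto_nhds.mp hP η hη).and
        ((s.eventually_all).2 fun x _ => Metric.tendsto_nhds.mp (hV x.1) η hη)).exists
      refine ⟨(i, k), ⟨not_lt.mp hiV, hkP.le⟩, fun x hx => ⟨?_, (hkV x hx).le⟩⟩
      exact Nat.lt_of_lt_of_le (Nat.lt_succ_of_le (s.le_sup (f := Prod.snd) hx)) hi)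
  obtain ⟨m, hm⟩ := hφ.exists_dist_lt (a := fun m => a (g m).1) (b := fun m => c (g m).2)
    (x := fun m => V (g m).1) (y := fun m => p (c (g m).2))
    (fun m m' hmm' => (hgr m m' hmm').2)
    (fun m m' hmm' => happ _ _ (hgr m m' hmm').1)
  have := dist_triangle (V (g m).1) (p (c (g m).2)) P
  linarith [(hg m).1, (hg m).2]

theorem IsStable.exists_determining [CompactSpace X] (hφ : IsStable ε φ) {p : B → X}
    (hp : p ∈ closure (range φ)) (hη : 0 < η) :
    ∃ (n : ℕ) (a : Fin n → A), ∀ b b', dist (fun i => φ (a i) b) (fun i => φ (a i) b') ≤ η →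
      dist (p b) (p b') ≤ 2 * ε + 7 * η := by
  classical
  by_contra! hcon
  -- Later `a`s approximate `p` at earlier `b, b'`; earlier `a`s do not separate later `b, b'`.
  obtain ⟨g, hfar, hrel⟩ := exists_seq_of_forall_finset_exists
    (fun x : A × B × B => 2 * ε + 7 * η < dist (p x.2.1) (p x.2.2))
    (fun x y => dist (φ y.1 x.2.1) (p x.2.1) ≤ η ∧ dist (φ y.1 x.2.2) (p x.2.2) ≤ η ∧
      dist (φ x.1 y.2.1) (φ x.1 y.2.2) ≤ η) (by
      intro s _
      obtain ⟨a₀, ha₀⟩ := exists_forall_dist_lt_of_mem_closure_range hp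
        (s.image (·.2.1) ∪ s.image (·.2.2)) hη
      let l := s.toList.map (·.1)
      obtain ⟨b, b', hbb', hfar⟩ := hcon l.length l.get
      refine ⟨(a₀, b, b'), hfar, fun x hx => ⟨(ha₀ _ ?_).le, (ha₀ _ ?_).le, ?_⟩⟩
      · exact Finset.mem_union_left _ (Finset.mem_image_of_mem _ hx)
      · exact Finset.mem_union_right _ (Finset.mem_image_of_mem _ hx)
      · obtain ⟨i, hi⟩ := List.mem_iff_get.mp
          (List.mem_map_of_mem (f := (·.1)) (Finset.mem_toList.mpr hx))
        exact hi ▸ (dist_pi_le_iff hη.le).mp hbb' i)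
  let W : Ultrafilter ℕ := Ultrafilter.of atTop
  have hlim (x : ℕ → X) : ∃ L, Tendsto x W (𝓝 L) :=
    let ⟨L, _, hL⟩ := isCompact_univ.ultrafilter_le_nhds (W.map x) (by simp)
    ⟨L, hL⟩
  have hW (i : ℕ) : ∀ᶠ k in (W : Filter ℕ), i < k :=
    Ultrafilter.of_le atTop (eventually_gt_atTop i)
  choose V hV using fun i => hlim fun k => φ (g i).1 (g k).2.1
  choose V' hV' using fun i => hlim fun k => φ (g i).1 (g k).2.2
  obtain ⟨P, hP⟩ := hlim fun k => p (g k).2.1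
  obtain ⟨P', hP'⟩ := hlim fun k => p (g k).2.2
  have hVV' (i) : dist (V i) (V' i) ≤ η :=
    le_of_tendsto ((hV i).dist (hV' i)) ((hW i).mono fun k hk => (hrel i k hk).2.2)
  have hPP' := ge_of_tendsto (hP.dist hP') (Eventually.of_forall fun k => (hfar k).le)
  -- For large `i` both limit rows are near the limits of `p`, which are far apart.
  obtain ⟨i, hi, hi'⟩ := ((hφ.eventually_dist_lt hV hP (fun k i h => (hrel k i h).1) hη).and
    (hφ.eventually_dist_lt hV' hP' (fun k i h => (hrel k i h).2.1) hη)).exists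
  linarith [dist_triangle4 P (V i) (V' i) P', dist_comm P (V i), hVV' i]

theorem IsStable.exists_symmetric_pair {ι κ : Type*} [Fintype ι] [Fintype κ]
    (hφ : IsStable ε φ) {p : B → X} {q : A → X} (hp : p ∈ closure (range φ))
    (hq : q ∈ closure (range fun b a => φ a b)) (a : ι → A) (b : κ → B) (hη : 0 < η) :
    ∃ a' b', dist (fun i => φ (a i) b') (fun i => q (a i)) < η ∧
      dist (fun j => φ a' (b j)) (fun j => p (b j)) < η ∧ dist (q a') (p b') < ε + 2 * η := by
  classical
  obtain ⟨g, hg, hgr⟩ := exists_seq_of_forall_finset_exists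
    (fun x : A × B => dist (fun i => φ (a i) x.2) (fun i => q (a i)) < η ∧
      dist (fun j => φ x.1 (b j)) (fun j => p (b j)) < η)
    (fun x y => dist (φ x.1 y.2) (q x.1) ≤ η ∧ dist (φ y.1 x.2) (p x.2) ≤ η) (by
      intro s _
      obtain ⟨b₀, hb₀⟩ := exists_forall_dist_lt_of_mem_closure_range hq
        (Finset.univ.image a ∪ s.image Prod.fst) hη
      obtain ⟨a₀, ha₀⟩ := exists_forall_dist_lt_of_mem_closure_range hp
        (Finset.univ.image b ∪ s.image Prod.snd) hη
      refine ⟨(a₀, b₀), ⟨(dist_pi_lt_iff hη).2 fun i => hb₀ _ ?_,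
        (dist_pi_lt_iff hη).2 fun j => ha₀ _ ?_⟩, fun x hx => ⟨(hb₀ _ ?_).le, (ha₀ _ ?_).le⟩⟩
      · exact Finset.mem_union_left _ (Finset.mem_image_of_mem _ (Finset.mem_univ i))
      · exact Finset.mem_union_left _ (Finset.mem_image_of_mem _ (Finset.mem_univ j))
      · exact Finset.mem_union_right _ (Finset.mem_image_of_mem _ hx)
      · exact Finset.mem_union_right _ (Finset.mem_image_of_mem _ hx))
  obtain ⟨m, hm⟩ := hφ.exists_dist_lt (a := fun m => (g m).1) (b := fun m => (g m).2)
    (x := fun m => q (g m).1) (y := fun m => p (g m).2)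
    (fun m m' h => (hgr m m' h).1) (fun m m' h => (hgr m m' h).2)
  exact ⟨_, _, (hg m).1, (hg m).2, hm⟩

theorem IsStable.exists_symmetric_pair_of_uniformContinuous {ι κ E F : Type*} [Fintype ι]
    [Fintype κ] [PseudoMetricSpace E] [PseudoMetricSpace F] (hφ : IsStable ε φ) {p : B → X}
    {q : A → X} (hp : p ∈ closure (range φ)) (hq : q ∈ closure (range fun b a => φ a b))
    (a : ι → A) (b : κ → B) {u : (ι → X) → E} {v : (κ → X) → F} (hu : UniformContinuous u)
    (hv : UniformContinuous v) {θ : ℝ} (hθ : 0 < θ) :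
    ∃ a' b', dist (u fun i => q (a i)) (u fun i => φ (a i) b') < θ ∧
      dist (v fun j => φ a' (b j)) (v fun j => p (b j)) < θ ∧ dist (q a') (p b') < ε + θ := by
  obtain ⟨δu, hδu, hu'⟩ := Metric.uniformContinuous_iff.mp hu θ hθ
  obtain ⟨δv, hδv, hv'⟩ := Metric.uniformContinuous_iff.mp hv θ hθ
  obtain ⟨a', b', ha', hb', hab⟩ :=
    hφ.exists_symmetric_pair hp hq a b (η := min (min δu δv) (θ / 2)) (by positivity)
  refine ⟨a', b', hu' ?_, hv' ?_, hab.trans_le ?_⟩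
  · rw [dist_comm]
    exact ha'.trans_le ((min_le_left _ _).trans (min_le_left _ _))
  · exact hb'.trans_le ((min_le_left _ _).trans (min_le_right _ _))
  · linarith [min_le_right (min δu δv) (θ / 2)]

end Stability

theorem exists_continuousMap_forall_dist_comp_le {B X E : Type*} [PseudoMetricSpace X]
    [SeminormedAddCommGroup E] [NormedSpace ℝ E] (g : B → X) (P : B → E) {η D : ℝ} (hη : 0 < η)
    (h : ∀ b b', dist (g b) (g b') ≤ η → dist (P b) (P b') ≤ D) :
    ∃ u : C(X, E), ∀ b, dist (u (g b)) (P b) ≤ D := by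
  -- The admissible values at `x` form the convex set of points `D`-close to `P b` for every `b`
  -- with `g b` near `x`; near each `x` one `P b₀` is admissible.
  obtain ⟨u, hu⟩ := exists_continuous_forall_mem_convex_of_local_const
    (t := fun x => ⋂ (b) (_ : dist (g b) x < η / 4), Metric.closedBall (P b) D)
    (fun x => convex_iInter₂ fun b _ => convex_closedBall _ _) (by
      intro x
      by_cases hx : ∃ b₀, dist (g b₀) x < η / 2
      · obtain ⟨b₀, hb₀⟩ := hx
        refine ⟨P b₀, Metric.eventually_nhds_iff_ball.2 ⟨η / 4, by positivity, fun y hy => ?_⟩⟩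
        refine mem_iInter₂.2 fun b hb => Metric.mem_closedBall'.2 (h b b₀ ?_)
        rw [Metric.mem_ball] at hy
        linarith [dist_triangle4 (g b) y x (g b₀), dist_comm x (g b₀)]
      · push Not at hx
        refine ⟨0, Metric.eventually_nhds_iff_ball.2 ⟨η / 4, by positivity, fun y hy => ?_⟩⟩
        refine mem_iInter₂.2 fun b hb => absurd (hx b) ?_
        have := dist_triangle (g b) y x
        rw [Metric.mem_ball] at hy
        linarith)
  refine ⟨u, fun b => Metric.mem_closedBall.1 (mem_iInter₂.1 (hu (g b)) b ?_)⟩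
  rw [dist_self]
  positivity

theorem stmt6_general {A B : Type*}
    (K : Set (lp (fun _ : ℕ => ℝ) ∞)) (hK : IsCompact K)
    (ε : ℝ) (f : A × B → K)
    (hf : ¬ ∃ (a : ℕ → A) (b : ℕ → B), ∀ i j : ℕ, i < j →
      ε ≤ ‖(f (a i, b j) : lp (fun _ : ℕ => ℝ) ∞) - f (a j, b i)‖)
    (p : B → K) (hp : p ∈ closure {g : B → K | ∃ a : A, g = fun b => f (a, b)})
    (q : A → K) (hq : q ∈ closure {g : A → K | ∃ b : B, g = fun a => f (a, b)})
    (γ : ℝ) (hγ : 0 < γ) :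
    ∃ (n m : ℕ) (a : Fin n → A) (b : Fin m → B)
      (u : (Fin n → K) → lp (fun _ : ℕ => ℝ) ∞)
      (v : (Fin m → K) → lp (fun _ : ℕ => ℝ) ∞),
      Continuous u ∧ Continuous v ∧
      (∀ b' : B, ‖u (fun i => f (a i, b')) - (p b' : lp (fun _ : ℕ => ℝ) ∞)‖ ≤ 2 * ε + γ / 2) ∧
      (∀ a' : A, ‖v (fun j => f (a', b j)) - (q a' : lp (fun _ : ℕ => ℝ) ∞)‖ ≤ 2 * ε + γ / 2) ∧
      ‖u (fun i => q (a i)) - v (fun j => p (b j))‖ ≤ 5 * ε + γ := by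
  have : CompactSpace K := isCompact_iff_compactSpace.mp hK
  have hφ : IsStable ε fun a b => f (a, b) := by
    simpa [IsStable, Subtype.dist_eq, dist_eq_norm] using hf
  have hp' : p ∈ closure (Set.range fun a b => f (a, b)) := by
    simpa only [Set.range, eq_comm] using hp
  have hq' : q ∈ closure (Set.range fun b a => f (a, b)) := by
    simpa only [Set.range, eq_comm] using hq
  obtain ⟨n, a, ha⟩ := hφ.exists_determining hp' (η := γ / 32) (by positivity)
  obtain ⟨m, b, hb⟩ := hφ.flip.exists_determining hq' (η := γ / 32) (by positivity)
  obtain ⟨u, hu⟩ := exists_continuousMap_forall_dist_comp_le (fun b' i => f (a i, b'))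
    (fun b' => (p b' : ℓ∞)) (by positivity) ha
  obtain ⟨v, hv⟩ := exists_continuousMap_forall_dist_comp_le (fun a' j => f (a', b j))
    (fun a' => (q a' : ℓ∞)) (by positivity) hb
  obtain ⟨a', b', hua, hvb, hab⟩ := hφ.exists_symmetric_pair_of_uniformContinuous hp' hq' a b
    (CompactSpace.uniformContinuous_of_continuous u.continuous)
    (CompactSpace.uniformContinuous_of_continuous v.continuous) (θ := γ / 16) (by positivity)
  refine ⟨n, m, a, b, u, v, u.continuous, v.continuous, fun b' => ?_, fun a' => ?_, ?_⟩
  · rw [← dist_eq_norm]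
    linarith [hu b']
  · rw [← dist_eq_norm]
    linarith [hv a']
  have hab' : dist (q a' : ℓ∞) (p b') < ε + γ / 16 := hab
  rw [← dist_eq_norm]
  calc dist (u fun i => q (a i)) (v fun j => p (b j))
      ≤ dist (u fun i => q (a i)) (u fun i => f (a i, b')) +
        dist (u fun i => f (a i, b')) (p b' : ℓ∞) + dist (p b' : ℓ∞) (q a') +
        dist (q a' : ℓ∞) (v fun j => f (a', b j)) +
        dist (v fun j => f (a', b j)) (v fun j => p (b j)) := by
        linarith [dist_triangle4 (u fun i => q (a i)) (u fun i => f (a i, b')) (p b' : ℓ∞) (q a'),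
          dist_triangle4 (u fun i => q (a i)) (q a' : ℓ∞) (v fun j => f (a', b j))
            (v fun j => p (b j))]
    _ ≤ 5 * ε + γ := by
        linarith [hu b', hv a', dist_comm (p b' : ℓ∞) (q a'),
          dist_comm (q a' : ℓ∞) (v fun j => f (a', b j))]

theorem stmt6 {A B : Type*} [Nonempty A] [Nonempty B]
    (K : Set (lp (fun _ : ℕ => ℝ) ∞)) (hK : IsCompact K)
    (ε : ℝ) (hε : 0 < ε) (f : A × B → K)
    (hf : ¬ ∃ (a : ℕ → A) (b : ℕ → B), ∀ i j : ℕ, i < j →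
      ε ≤ ‖(f (a i, b j) : lp (fun _ : ℕ => ℝ) ∞) - f (a j, b i)‖)
    (p : B → K) (hp : p ∈ closure {g : B → K | ∃ a : A, g = fun b => f (a, b)})
    (q : A → K) (hq : q ∈ closure {g : A → K | ∃ b : B, g = fun a => f (a, b)})
    (γ : ℝ) (hγ : 0 < γ) :
    ∃ (n m : ℕ) (a : Fin n → A) (b : Fin m → B)
      (u : (Fin n → K) → lp (fun _ : ℕ => ℝ) ∞)
      (v : (Fin m → K) → lp (fun _ : ℕ => ℝ) ∞),
      Continuous u ∧ Continuous v ∧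
      (∀ b' : B, ‖u (fun i => f (a i, b')) - (p b' : lp (fun _ : ℕ => ℝ) ∞)‖ ≤ 2 * ε + γ / 2) ∧
      (∀ a' : A, ‖v (fun j => f (a', b j)) - (q a' : lp (fun _ : ℕ => ℝ) ∞)‖ ≤ 2 * ε + γ / 2) ∧
      ‖u (fun i => q (a i)) - v (fun j => p (b j))‖ ≤ 5 * ε + γ :=
  stmt6_general K hK ε f hf p hp q hq γ hγ
end

section
/- Let A and B be sets and let f, g : A × B → ℝ be bounded functions. Then Stb(f + g) ≤ Stb(f) + Stb(g), where f + g is the pointwise sum. -/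
/-!
If a pair of sequences witnesses `|(f + g)(a i, b j) - (f + g)(a j, b i)| ≥ ε + δ` for all
`i < j`, colour each pair `i < j` by whether the `f`-difference is at least `ε`. By Ramsey's
theorem some subsequence is monochromatic: in one colour it witnesses the `ε`-order property
for `f`, in the other the triangle inequality leaves `g`-differences of size at least `δ`.
Hence every sum of admissible thresholds for `f` and `g` is admissible for `f + g`, and the
infimum of such sums is `Stb f + Stb g` as soon as both sets of thresholds are nonempty, which is
what boundedness provides.
-/

/-- The stability degree of a bounded function `f : A × B → ℝ`: the infimum of the set of
`ε > 0` such that there are no sequences `a : ℕ → A`, `b : ℕ → B` with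
`|f (a i, b j) - f (a j, b i)| ≥ ε` for all `i < j`. -/
noncomputable def Stb {A B : Type*} (f : A × B → ℝ) : ℝ :=
  sInf {ε : ℝ | 0 < ε ∧ ¬ ∃ (a : ℕ → A) (b : ℕ → B), ∀ i j : ℕ, i < j →
    ε ≤ |f (a i, b j) - f (a j, b i)|}

open Filter Pointwise

theorem Nat.exists_strictMono_forall_lt_of_eventually_eventually {R : ℕ → ℕ → Prop}
    {U : Filter ℕ} [U.NeBot] (hU : U ≤ atTop) (h : ∀ᶠ i in U, ∀ᶠ j in U, R i j) :
    ∃ φ : ℕ → ℕ, StrictMono φ ∧ ∀ i j, i < j → R (φ i) (φ j) := by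
  obtain ⟨φ, -, hφ⟩ := exists_seq_of_forall_finset_exists (fun i => ∀ᶠ j in U, R i j)
    (fun i j => i < j ∧ R i j) fun s hs =>
      (h.and ((eventually_all_finset s).2 fun i hi =>
        ((eventually_gt_atTop i).filter_mono hU).and (hs i hi))).exists
  exact ⟨φ, fun i j hij => (hφ i j hij).1, fun i j hij => (hφ i j hij).2⟩

theorem Nat.exists_strictMono_forall_lt_or_forall_lt_not (c : ℕ → ℕ → Prop) :
    ∃ φ : ℕ → ℕ, StrictMono φ ∧
      ((∀ i j, i < j → c (φ i) (φ j)) ∨ ∀ i j, i < j → ¬ c (φ i) (φ j)) := by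
  let U := hyperfilter ℕ
  have hU : (U : Filter ℕ) ≤ atTop := Nat.cofinite_eq_atTop ▸ hyperfilter_le_cofinite
  by_cases hc : ∀ᶠ i in (U : Filter ℕ), ∀ᶠ j in (U : Filter ℕ), c i j
  · obtain ⟨φ, hφ, hcφ⟩ := exists_strictMono_forall_lt_of_eventually_eventually hU hc
    exact ⟨φ, hφ, Or.inl hcφ⟩
  · have hnc : ∀ᶠ i in (U : Filter ℕ), ∀ᶠ j in (U : Filter ℕ), ¬ c i j := by
      simpa only [Ultrafilter.eventually_not] using hc
    obtain ⟨φ, hφ, hcφ⟩ := exists_strictMono_forall_lt_of_eventually_eventually hU hnc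
    exact ⟨φ, hφ, Or.inr hcφ⟩

section OrderProperty

variable {A B : Type*}

def HasOrderProperty (f : A × B → ℝ) (ε : ℝ) : Prop :=
  ∃ (a : ℕ → A) (b : ℕ → B), ∀ i j : ℕ, i < j → ε ≤ |f (a i, b j) - f (a j, b i)|

def stbSet (f : A × B → ℝ) : Set ℝ :=
  {ε | 0 < ε ∧ ¬ HasOrderProperty f ε}

theorem stb_eq_sInf_stbSet (f : A × B → ℝ) : Stb f = sInf (stbSet f) := rfl

theorem HasOrderProperty.of_add {f g : A × B → ℝ} {ε δ : ℝ}
    (h : HasOrderProperty (f + g) (ε + δ)) : HasOrderProperty f ε ∨ HasOrderProperty g δ := by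
  obtain ⟨a, b, hab⟩ := h
  obtain ⟨φ, hφ, hf | hf⟩ := Nat.exists_strictMono_forall_lt_or_forall_lt_not
    fun i j => ε ≤ |f (a i, b j) - f (a j, b i)|
  · exact Or.inl ⟨a ∘ φ, b ∘ φ, hf⟩
  · refine Or.inr ⟨a ∘ φ, b ∘ φ, fun i j hij => ?_⟩
    have hsum := hab (φ i) (φ j) (hφ hij)
    have htri := abs_add_le (f (a (φ i), b (φ j)) - f (a (φ j), b (φ i)))
      (g (a (φ i), b (φ j)) - g (a (φ j), b (φ i)))
    rw [← add_sub_add_comm] at htri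
    simp only [Pi.add_apply, Function.comp_apply] at hsum hf ⊢
    linarith [not_le.mp (hf i j hij)]

theorem stbSet_add_subset (f g : A × B → ℝ) : stbSet f + stbSet g ⊆ stbSet (f + g) :=
  Set.add_subset_iff.2 fun _ hε _ hδ =>
    ⟨add_pos hε.1 hδ.1, fun h => h.of_add.elim hε.2 hδ.2⟩

theorem stbSet_nonempty_of_bounded {f : A × B → ℝ} (hf : ∃ C : ℝ, ∀ x : A × B, |f x| ≤ C) :
    (stbSet f).Nonempty := by
  obtain ⟨C, hC⟩ := hf
  refine ⟨2 * max C 0 + 1, by positivity, fun ⟨a, b, hab⟩ => ?_⟩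
  have h01 := hab 0 1 one_pos
  have htri := abs_sub (f (a 0, b 1)) (f (a 1, b 0))
  linarith [hC (a 0, b 1), hC (a 1, b 0), le_max_left C 0]

theorem bddBelow_stbSet (f : A × B → ℝ) : BddBelow (stbSet f) :=
  ⟨0, fun _ hε => hε.1.le⟩

end OrderProperty

theorem stmt9 {A B : Type*} (f g : A × B → ℝ)
    (hf : ∃ C : ℝ, ∀ x : A × B, |f x| ≤ C)
    (hg : ∃ C : ℝ, ∀ x : A × B, |g x| ≤ C) :
    Stb (f + g) ≤ Stb f + Stb g := by
  have hfne := stbSet_nonempty_of_bounded hf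
  have hgne := stbSet_nonempty_of_bounded hg
  rw [stb_eq_sInf_stbSet, stb_eq_sInf_stbSet, stb_eq_sInf_stbSet,
    ← csInf_add hfne (bddBelow_stbSet f) hgne (bddBelow_stbSet g)]
  exact csInf_le_csInf (bddBelow_stbSet _) (hfne.add hgne) (stbSet_add_subset f g)
end
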